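/- arXiv:1405.3681 — 3 statements merged into one kernel-verified Lean document; each statement's English description precedes it below -/
import Mathlib

section
/- In a symmetric monoidal category C with discarding morphisms d_A : A → I (d_I = id_I), suppose (!) holds: the only morphism I → I is id_I. If every morphism f : A → B, viewed as a two-party process with the second party's input and output trivial (i.e. F = f ⊗ id_I up to unitors), is non-signalling, then the theory is terminal: d_B ∘ f = d_A for all f : A → B. -/
/-!
Viewing `f : A ⟶ B` as the bipartite process `f ⊗ 𝟙 I`, non-signalling from the trivial second
party says that discarding the output of `f` equals discarding its input followed by some scalar
`I ⟶ I`. Under (!) that scalar is the identity, so `f ≫ d B = d A`.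
-/

open CategoryTheory MonoidalCategory

/-- Non-signalling of a bipartite process `F : A ⊗ A' ⟶ Cc ⊗ Cc'` with respect to a
family of discarding effects `d`: discarding one party's output makes the result factor
through discarding that party's input. -/
def NonSignalling {C : Type*} [Category C] [MonoidalCategory C] [SymmetricCategory C]
    (d : ∀ A : C, A ⟶ 𝟙_ C) {A A' Cc Cc' : C} (F : A ⊗ A' ⟶ Cc ⊗ Cc') : Prop :=
  (∃ h : A' ⟶ Cc',
      F ≫ (d Cc ⊗ₘ 𝟙 Cc') ≫ (λ_ Cc').hom = (d A ⊗ₘ 𝟙 A') ≫ (λ_ A').hom ≫ h) ∧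
  (∃ h' : A ⟶ Cc,
      F ≫ (𝟙 Cc ⊗ₘ d Cc') ≫ (ρ_ Cc).hom = (𝟙 A ⊗ₘ d A') ≫ (ρ_ A).hom ≫ h')

namespace CategoryTheory.MonoidalCategory

variable {C : Type*} [Category C] [MonoidalCategory C]

theorem tensorHom_id_tensorUnit_comp_leftUnitor {X : C} (g : X ⟶ 𝟙_ C) :
    (g ⊗ₘ 𝟙 (𝟙_ C)) ≫ (λ_ (𝟙_ C)).hom = (ρ_ X).hom ≫ g := by
  rw [unitors_equal, tensorHom_id, rightUnitor_naturality]

end CategoryTheory.MonoidalCategory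

theorem NonSignalling.exists_comp_discard_eq_discard_comp_scalar
    {C : Type*} [Category C] [MonoidalCategory C] [SymmetricCategory C]
    {d : ∀ A : C, A ⟶ 𝟙_ C} {A B : C} {f : A ⟶ B} (hf : NonSignalling d (f ⊗ₘ 𝟙 (𝟙_ C))) :
    ∃ s : 𝟙_ C ⟶ 𝟙_ C, f ≫ d B = d A ≫ s := by
  obtain ⟨⟨s, hs⟩, -⟩ := hf
  refine ⟨s, (cancel_epi (ρ_ A).hom).mp ?_⟩
  rwa [tensorHom_comp_tensorHom_assoc, Category.id_comp, tensorHom_id_tensorUnit_comp_leftUnitor,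
    reassoc_of% tensorHom_id_tensorUnit_comp_leftUnitor] at hs

theorem nonsignalling_implies_terminality_general
    {C : Type*} [Category C] [MonoidalCategory C] [SymmetricCategory C]
    (d : ∀ A : C, A ⟶ 𝟙_ C)
    (bang : ∀ e : 𝟙_ C ⟶ 𝟙_ C, e = 𝟙 (𝟙_ C))
    (ns : ∀ (A B : C) (f : A ⟶ B), NonSignalling d (f ⊗ₘ 𝟙 (𝟙_ C))) :
    ∀ (A B : C) (f : A ⟶ B), f ≫ d B = d A := by
  intro A B f
  obtain ⟨s, hs⟩ := (ns A B f).exists_comp_discard_eq_discard_comp_scalar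
  rwa [bang s, Category.comp_id] at hs

/-- Theorem 2: assuming (!) (the only scalar is the identity on the unit), if every
process `f : A ⟶ B`, viewed as a two-party process with the second party trivial
(`f ⊗ 𝟙 (𝟙_ C)`), is non-signalling, then the theory is terminal: `f ≫ d B = d A`. -/
theorem nonsignalling_implies_terminality
    {C : Type*} [Category C] [MonoidalCategory C] [SymmetricCategory C]
    (d : ∀ A : C, A ⟶ 𝟙_ C) (hdI : d (𝟙_ C) = 𝟙 (𝟙_ C))
    (bang : ∀ e : 𝟙_ C ⟶ 𝟙_ C, e = 𝟙 (𝟙_ C))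
    (ns : ∀ (A B : C) (f : A ⟶ B), NonSignalling d (f ⊗ₘ 𝟙 (𝟙_ C))) :
    ∀ (A B : C) (f : A ⟶ B), f ≫ d B = d A :=
  nonsignalling_implies_terminality_general d bang ns
end

section
/- Let Φ : M_{m}(ℂ) ⊗ M_{m'}(ℂ) → M_{n}(ℂ) ⊗ M_{n'}(ℂ) be a linear map of the form Φ = (Tr_{hidden} ⊗ id) ∘ (Φ_A ⊗ Φ_B) ∘ Φ_0 where Φ_0, Φ_A, Φ_B are trace-preserving linear maps, Φ_A acts only on Alice's factor (tensored with her share of the hidden system), Φ_B only on Bob's, and Tr_hidden discards the remaining hidden outputs. Then Φ is non-signalling: Tr_{n'}(Φ(ρ)) depends only on Tr_{m'}(ρ) — i.e. there exists a linear map h : M_m(ℂ) → M_n(ℂ) with Tr_{B-out} ∘ Φ = h ∘ Tr_{B-in}, and symmetrically for the other party. -/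
/-!
On matrix units, `Φ` is `ΨA ⊗ ΨB` applied to the joint input `σ ⊗ ρ` regrouped as
(Alice's factors) × (Bob's factors), where `ΨA = Tr_{k₂} ∘ ΦA` and `ΨB = Tr_{k₂'} ∘ ΦB` are again
trace preserving. Tracing out Bob's output turns each summand `ΨA E ⊗ ΨB E'` into
`tr (ΨB E') • ΨA E = tr E' • ΨA E`, so Alice's marginal of the output is `ΨA` applied to Alice's
marginal of the joint input, which is `Tr_{k'} σ ⊗ Tr_{m'} ρ`. The marginal channel is therefore
`X ↦ ΨA (Tr_{k'} σ ⊗ X)`, and symmetrically for Bob.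
-/

open scoped BigOperators

/-- Partial trace over the second tensor factor. -/
noncomputable def ptrace₂ {m m' : ℕ} (ρ : Matrix (Fin m × Fin m') (Fin m × Fin m') ℂ) :
    Matrix (Fin m) (Fin m) ℂ :=
  Matrix.of fun i j => ∑ s : Fin m', ρ (i, s) (j, s)

/-- Partial trace over the first tensor factor. -/
noncomputable def ptrace₁ {m m' : ℕ} (ρ : Matrix (Fin m × Fin m') (Fin m × Fin m') ℂ) :
    Matrix (Fin m') (Fin m') ℂ :=
  Matrix.of fun i j => ∑ s : Fin m, ρ (s, i) (s, j)

open Matrix Kronecker Finset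

namespace Matrix

variable {R : Type*} [CommSemiring R] {α β γ δ : Type*}

variable (R α β) in
def traceRight [Fintype β] : Matrix (α × β) (α × β) R →ₗ[R] Matrix α α R where
  toFun M := of fun i j => ∑ s, M (i, s) (j, s)
  map_add' M N := by ext; simp [sum_add_distrib]
  map_smul' c M := by ext; simp [mul_sum]

variable (R α β) in
def traceLeft [Fintype α] : Matrix (α × β) (α × β) R →ₗ[R] Matrix β β R where
  toFun M := of fun i j => ∑ s, M (s, i) (s, j)
  map_add' M N := by ext; simp [sum_add_distrib]
  map_smul' c M := by ext; simp [mul_sum]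

theorem traceRight_apply [Fintype β] (M : Matrix (α × β) (α × β) R) (i j : α) :
    traceRight R α β M i j = ∑ s, M (i, s) (j, s) :=
  rfl

theorem traceLeft_apply [Fintype α] (M : Matrix (α × β) (α × β) R) (i j : β) :
    traceLeft R α β M i j = ∑ s, M (s, i) (s, j) :=
  rfl

theorem traceRight_kronecker [Fintype β] (A : Matrix α α R) (B : Matrix β β R) :
    traceRight R α β (A ⊗ₖ B) = B.trace • A := by
  ext i j
  simp [traceRight_apply, trace, ← mul_sum, mul_comm]

theorem traceLeft_kronecker [Fintype α] (A : Matrix α α R) (B : Matrix β β R) :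
    traceLeft R α β (A ⊗ₖ B) = A.trace • B := by
  ext i j
  simp [traceLeft_apply, trace, ← sum_mul]

theorem trace_traceRight [Fintype α] [Fintype β] (M : Matrix (α × β) (α × β) R) :
    (traceRight R α β M).trace = M.trace := by
  simp [trace, traceRight_apply, Fintype.sum_prod_type]

theorem traceRight_reindex_prodProdProdComm_kronecker {α' β' : Type*} [Fintype α'] [Fintype β']
    (A : Matrix (α × α') (α × α') R) (B : Matrix (β × β') (β × β') R) :
    traceRight R (α × β) (α' × β')
        (reindex (Equiv.prodProdProdComm α α' β β') (Equiv.prodProdProdComm α α' β β')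
          (A ⊗ₖ B)) =
      traceRight R α α' A ⊗ₖ traceRight R β β' B := by
  ext ⟨i, i'⟩ ⟨j, j'⟩
  simp [traceRight_apply, Fintype.sum_prod_type, sum_mul_sum]

theorem traceLeft_reindex_prodProdProdComm_kronecker {α' β' : Type*} [Fintype α] [Fintype β]
    (A : Matrix (α × α') (α × α') R) (B : Matrix (β × β') (β × β') R) :
    traceLeft R (α × β) (α' × β')
        (reindex (Equiv.prodProdProdComm α α' β β') (Equiv.prodProdProdComm α α' β β')
          (A ⊗ₖ B)) =
      traceLeft R α α' A ⊗ₖ traceLeft R β β' B := by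
  ext ⟨i, i'⟩ ⟨j, j'⟩
  simp [traceLeft_apply, Fintype.sum_prod_type, sum_mul_sum]

theorem sum_sum_trace_single_smul [Fintype β] [DecidableEq β] {M : Type*} [AddCommMonoid M]
    [Module R M] (f : β → β → M) :
    ∑ q, ∑ q', (single q q' (1 : R)).trace • f q q' = ∑ q, f q q := by
  refine sum_congr rfl fun q _ => ?_
  rw [sum_eq_single q (fun q' _ h => by simp [Ne.symm h]) (by simp)]
  simp

section TensorMap

variable [Fintype α] [Fintype β] [DecidableEq α] [DecidableEq β]

/-- `Ψ ⊗ Ψ'`, transported along the Kronecker identification of `Matrix (α × β) (α × β) R` with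
`Matrix α α R ⊗ Matrix β β R` and written out on matrix units. -/
def tensorMap (Ψ : Matrix α α R →ₗ[R] Matrix γ γ R) (Ψ' : Matrix β β R →ₗ[R] Matrix δ δ R)
    (Γ : Matrix (α × β) (α × β) R) : Matrix (γ × δ) (γ × δ) R :=
  ∑ p, ∑ p', ∑ q, ∑ q', Γ (p, q) (p', q') • (Ψ (single p p' 1) ⊗ₖ Ψ' (single q q' 1))

variable (Ψ : Matrix α α R →ₗ[R] Matrix γ γ R) (Ψ' : Matrix β β R →ₗ[R] Matrix δ δ R)

theorem tensorMap_apply (Γ : Matrix (α × β) (α × β) R) (i j : γ × δ) :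
    tensorMap Ψ Ψ' Γ i j =
      ∑ p, ∑ p', ∑ q, ∑ q', Γ (p, q) (p', q') * (Ψ (single p p' 1) i.1 j.1 *
        Ψ' (single q q' 1) i.2 j.2) := by
  simp [tensorMap, Matrix.sum_apply]

theorem traceRight_tensorMap [Fintype δ] (hΨ' : ∀ X, (Ψ' X).trace = X.trace)
    (Γ : Matrix (α × β) (α × β) R) :
    traceRight R γ δ (tensorMap Ψ Ψ' Γ) = Ψ (traceRight R α β Γ) := by
  conv_rhs => rw [matrix_eq_sum_single (traceRight R α β Γ)]
  simp only [tensorMap, map_sum, map_smul, traceRight_kronecker, hΨ', smul_comm (Γ _ _) (trace _)]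
  refine sum_congr rfl fun p _ => sum_congr rfl fun p' _ => ?_
  rw [sum_sum_trace_single_smul, traceRight_apply, ← sum_smul, ← map_smul, smul_single,
    smul_eq_mul, mul_one]

theorem traceLeft_tensorMap [Fintype γ] (hΨ : ∀ X, (Ψ X).trace = X.trace)
    (Γ : Matrix (α × β) (α × β) R) :
    traceLeft R γ δ (tensorMap Ψ Ψ' Γ) = Ψ' (traceLeft R α β Γ) := by
  conv_rhs => rw [matrix_eq_sum_single (traceLeft R α β Γ)]
  simp only [tensorMap, map_sum, map_smul, traceLeft_kronecker, hΨ,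
    smul_comm (Γ _ _) (trace _), ← smul_sum]
  rw [sum_sum_trace_single_smul, sum_comm]
  refine sum_congr rfl fun q _ => ?_
  rw [sum_comm]
  refine sum_congr rfl fun q' _ => ?_
  rw [traceLeft_apply, ← sum_smul, ← map_smul, smul_single, smul_eq_mul, mul_one]

end TensorMap

end Matrix

theorem ptrace₂_eq_traceRight {m m' : ℕ} (ρ : Matrix (Fin m × Fin m') (Fin m × Fin m') ℂ) :
    ptrace₂ ρ = traceRight ℂ (Fin m) (Fin m') ρ :=
  rfl

theorem ptrace₁_eq_traceLeft {m m' : ℕ} (ρ : Matrix (Fin m × Fin m') (Fin m × Fin m') ℂ) :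
    ptrace₁ ρ = traceLeft ℂ (Fin m) (Fin m') ρ :=
  rfl

theorem diamond_eq_tensorMap {m m' n n' k k' k₂ k₂' : ℕ}
    (σ : Matrix (Fin k × Fin k') (Fin k × Fin k') ℂ)
    (ΦA : Matrix (Fin k × Fin m) (Fin k × Fin m) ℂ →ₗ[ℂ]
      Matrix (Fin n × Fin k₂) (Fin n × Fin k₂) ℂ)
    (ΦB : Matrix (Fin k' × Fin m') (Fin k' × Fin m') ℂ →ₗ[ℂ]
      Matrix (Fin n' × Fin k₂') (Fin n' × Fin k₂') ℂ)
    (Φ : Matrix (Fin m × Fin m') (Fin m × Fin m') ℂ →ₗ[ℂ]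
      Matrix (Fin n × Fin n') (Fin n × Fin n') ℂ)
    (hΦ : ∀ ρ b b' c c', Φ ρ (b, b') (c, c') =
      ∑ x₂ : Fin k₂, ∑ y₂ : Fin k₂',
      ∑ u : Fin k, ∑ w : Fin k, ∑ v : Fin k', ∑ z : Fin k',
      ∑ a : Fin m, ∑ a₁ : Fin m, ∑ a' : Fin m', ∑ a₁' : Fin m',
        σ (u, v) (w, z) * ρ (a, a') (a₁, a₁') *
          ΦA (single (u, a) (w, a₁) 1) (b, x₂) (c, x₂) *
          ΦB (single (v, a') (z, a₁') 1) (b', y₂) (c', y₂))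
    (ρ : Matrix (Fin m × Fin m') (Fin m × Fin m') ℂ) :
    Φ ρ = tensorMap (traceRight ℂ (Fin n) (Fin k₂) ∘ₗ ΦA) (traceRight ℂ (Fin n') (Fin k₂') ∘ₗ ΦB)
      (reindex (Equiv.prodProdProdComm _ _ _ _) (Equiv.prodProdProdComm _ _ _ _) (σ ⊗ₖ ρ)) := by
  have reorder : ∀ f : Fin k₂ → Fin k₂' → Fin k → Fin k → Fin k' → Fin k' → Fin m → Fin m →
      Fin m' → Fin m' → ℂ,
      ∑ x₂, ∑ y₂, ∑ u, ∑ w, ∑ v, ∑ z, ∑ a, ∑ a₁, ∑ a', ∑ a₁', f x₂ y₂ u w v z a a₁ a' a₁' =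
        ∑ u, ∑ a, ∑ w, ∑ a₁, ∑ v, ∑ a', ∑ z, ∑ a₁', ∑ y₂, ∑ x₂, f x₂ y₂ u w v z a a₁ a' a₁' := by
    intro f
    simp only [sum_comm (s := (univ : Finset (Fin k₂)))]
    simp only [sum_comm (s := (univ : Finset (Fin k₂')))]
    simp only [sum_comm (s := (univ : Finset (Fin m))) (t := (univ : Finset (Fin k))),
      sum_comm (s := (univ : Finset (Fin m'))) (t := (univ : Finset (Fin k'))),
      sum_comm (s := (univ : Finset (Fin k'))) (t := (univ : Finset (Fin m)))]
  ext ⟨b, b'⟩ ⟨c, c'⟩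
  rw [hΦ, reorder, tensorMap_apply]
  simp only [Fintype.sum_prod_type, LinearMap.comp_apply, traceRight_apply, reindex_apply,
    submatrix_apply, Equiv.prodProdProdComm_symm, Equiv.prodProdProdComm_apply, kronecker_apply,
    sum_mul, mul_sum, mul_assoc]

theorem quantum_diamond_nonsignalling_general
    (m m' n n' k k' k₂ k₂' : ℕ)
    (σ : Matrix (Fin k × Fin k') (Fin k × Fin k') ℂ)
    (ΦA : Matrix (Fin k × Fin m) (Fin k × Fin m) ℂ →ₗ[ℂ]
          Matrix (Fin n × Fin k₂) (Fin n × Fin k₂) ℂ)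
    (ΦB : Matrix (Fin k' × Fin m') (Fin k' × Fin m') ℂ →ₗ[ℂ]
          Matrix (Fin n' × Fin k₂') (Fin n' × Fin k₂') ℂ)
    (hA : ∀ X, (ΦA X).trace = X.trace)
    (hB : ∀ X, (ΦB X).trace = X.trace)
    (Φ : Matrix (Fin m × Fin m') (Fin m × Fin m') ℂ →ₗ[ℂ]
         Matrix (Fin n × Fin n') (Fin n × Fin n') ℂ)
    (hΦ : ∀ ρ b b' c c', Φ ρ (b, b') (c, c') =
      ∑ x₂ : Fin k₂, ∑ y₂ : Fin k₂',
      ∑ u : Fin k, ∑ w : Fin k, ∑ v : Fin k', ∑ z : Fin k',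
      ∑ a : Fin m, ∑ a₁ : Fin m, ∑ a' : Fin m', ∑ a₁' : Fin m',
        σ (u, v) (w, z) * ρ (a, a') (a₁, a₁') *
          ΦA (Matrix.single (u, a) (w, a₁) 1) (b, x₂) (c, x₂) *
          ΦB (Matrix.single (v, a') (z, a₁') 1) (b', y₂) (c', y₂)) :
    (∃ h : Matrix (Fin m) (Fin m) ℂ →ₗ[ℂ] Matrix (Fin n) (Fin n) ℂ,
      ∀ ρ, ptrace₂ (Φ ρ) = h (ptrace₂ ρ)) ∧
    (∃ h' : Matrix (Fin m') (Fin m') ℂ →ₗ[ℂ] Matrix (Fin n') (Fin n') ℂ,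
      ∀ ρ, ptrace₁ (Φ ρ) = h' (ptrace₁ ρ)) := by
  set ΨA := traceRight ℂ (Fin n) (Fin k₂) ∘ₗ ΦA
  set ΨB := traceRight ℂ (Fin n') (Fin k₂') ∘ₗ ΦB
  have hΨA : ∀ X, (ΨA X).trace = X.trace := fun X => (trace_traceRight _).trans (hA X)
  have hΨB : ∀ X, (ΨB X).trace = X.trace := fun X => (trace_traceRight _).trans (hB X)
  refine ⟨⟨ΨA ∘ₗ kroneckerBilinear (R := ℂ) (traceRight ℂ _ _ σ), fun ρ => ?_⟩,
    ⟨ΨB ∘ₗ kroneckerBilinear (R := ℂ) (traceLeft ℂ _ _ σ), fun ρ => ?_⟩⟩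
  · rw [ptrace₂_eq_traceRight, diamond_eq_tensorMap σ ΦA ΦB Φ hΦ, traceRight_tensorMap _ _ hΨB,
      traceRight_reindex_prodProdProdComm_kronecker]
    rfl
  · rw [ptrace₁_eq_traceLeft, diamond_eq_tensorMap σ ΦA ΦB Φ hΦ, traceLeft_tensorMap _ _ hΨA,
      traceLeft_reindex_prodProdProdComm_kronecker]
    rfl

/-- Quantum instance of Theorem 1: a channel `Φ` of diamond form — a shared (hidden)
preparation `σ` of unit trace, local trace-preserving maps `ΦA` (acting on Alice's input
together with her share of the hidden system) and `ΦB` (likewise for Bob), followed by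
tracing out the remaining hidden outputs — is non-signalling: the partial trace of the
output over one party's system depends only on the partial trace of the input over that
party's system, via a linear map. -/
theorem quantum_diamond_nonsignalling
    (m m' n n' k k' k₂ k₂' : ℕ)
    (σ : Matrix (Fin k × Fin k') (Fin k × Fin k') ℂ) (hσ : σ.trace = 1)
    (ΦA : Matrix (Fin k × Fin m) (Fin k × Fin m) ℂ →ₗ[ℂ]
          Matrix (Fin n × Fin k₂) (Fin n × Fin k₂) ℂ)
    (ΦB : Matrix (Fin k' × Fin m') (Fin k' × Fin m') ℂ →ₗ[ℂ]
          Matrix (Fin n' × Fin k₂') (Fin n' × Fin k₂') ℂ)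
    (hA : ∀ X, (ΦA X).trace = X.trace)
    (hB : ∀ X, (ΦB X).trace = X.trace)
    (Φ : Matrix (Fin m × Fin m') (Fin m × Fin m') ℂ →ₗ[ℂ]
         Matrix (Fin n × Fin n') (Fin n × Fin n') ℂ)
    (hΦ : ∀ ρ b b' c c', Φ ρ (b, b') (c, c') =
      ∑ x₂ : Fin k₂, ∑ y₂ : Fin k₂',
      ∑ u : Fin k, ∑ w : Fin k, ∑ v : Fin k', ∑ z : Fin k',
      ∑ a : Fin m, ∑ a₁ : Fin m, ∑ a' : Fin m', ∑ a₁' : Fin m',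
        σ (u, v) (w, z) * ρ (a, a') (a₁, a₁') *
          ΦA (Matrix.single (u, a) (w, a₁) 1) (b, x₂) (c, x₂) *
          ΦB (Matrix.single (v, a') (z, a₁') 1) (b', y₂) (c', y₂)) :
    (∃ h : Matrix (Fin m) (Fin m) ℂ →ₗ[ℂ] Matrix (Fin n) (Fin n) ℂ,
      ∀ ρ, ptrace₂ (Φ ρ) = h (ptrace₂ ρ)) ∧
    (∃ h' : Matrix (Fin m') (Fin m') ℂ →ₗ[ℂ] Matrix (Fin n') (Fin n') ℂ,
      ∀ ρ, ptrace₁ (Φ ρ) = h' (ptrace₁ ρ)) :=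
  quantum_diamond_nonsignalling_general m m' n n' k k' k₂ k₂' σ ΦA ΦB hA hB Φ hΦ
end

section
/- In a symmetric monoidal category with discarding d_A : A → I and d_I = id_I, suppose End(I) = {id_I} (axiom (!)). If the process f ⊗ id_{A'} : A ⊗ A' → B ⊗ A' is non-signalling for every f : A → B and every object A', then taking A' = I shows d_B ∘ f = d_A; conversely if d_B ∘ f = d_A for all f then f ⊗ id_{A'} is non-signalling for all f, A'. Hence under (!), 'all trivially-extended single-party processes are non-signalling' is equivalent to terminality. -/
open CategoryTheory MonoidalCategory

theorem whiskerRight_unit_comp_leftUnitor {C : Type*} [Category C] [MonoidalCategory C]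
    {A : C} (g : A ⟶ 𝟙_ C) : g ▷ 𝟙_ C ≫ (λ_ (𝟙_ C)).hom = (ρ_ A).hom ≫ g := by
  rw [unitors_equal, rightUnitor_naturality]

namespace NonSignalling

variable {C : Type*} [Category C] [MonoidalCategory C] [SymmetricCategory C]
  (d : ∀ A : C, A ⟶ 𝟙_ C)

theorem tensorHom_id_of_comp_discard {A B : C} (f : A ⟶ B) (hf : f ≫ d B = d A) (A' : C) :
    NonSignalling d (f ⊗ₘ 𝟙 A') := by
  refine ⟨⟨𝟙 A', ?_⟩, ⟨f, ?_⟩⟩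
  · rw [← Category.assoc, tensorHom_comp_tensorHom, hf, Category.comp_id, Category.comp_id]
  · simp only [tensorHom_id, id_tensorHom, ← Category.assoc, ← whisker_exchange]
    simp only [Category.assoc, rightUnitor_naturality]

theorem comp_discard_of_tensorHom_unit (bang : ∀ e : 𝟙_ C ⟶ 𝟙_ C, e = 𝟙 (𝟙_ C))
    {A B : C} (f : A ⟶ B) (hf : NonSignalling d (f ⊗ₘ 𝟙 (𝟙_ C))) : f ≫ d B = d A := by
  obtain ⟨⟨h, hh⟩, -⟩ := hf
  rw [bang h, Category.comp_id, ← Category.assoc, tensorHom_comp_tensorHom, Category.comp_id,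
    tensorHom_id, tensorHom_id, whiskerRight_unit_comp_leftUnitor,
    whiskerRight_unit_comp_leftUnitor] at hh
  exact (cancel_epi _).mp hh

end NonSignalling

theorem nonsignalling_iff_terminality_general
    {C : Type*} [Category C] [MonoidalCategory C] [SymmetricCategory C]
    (d : ∀ A : C, A ⟶ 𝟙_ C)
    (bang : ∀ e : 𝟙_ C ⟶ 𝟙_ C, e = 𝟙 (𝟙_ C)) :
    (∀ (A B A' : C) (f : A ⟶ B), NonSignalling d (f ⊗ₘ 𝟙 A')) ↔
      (∀ (A B : C) (f : A ⟶ B), f ≫ d B = d A) :=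
  ⟨fun H A B f ↦ NonSignalling.comp_discard_of_tensorHom_unit d bang f (H A B (𝟙_ C) f),
    fun H A B A' f ↦ NonSignalling.tensorHom_id_of_comp_discard d f (H A B f) A'⟩

/-- Under axiom (!) (the only endomorphism of the unit is the identity), all
trivially-extended single-party processes `f ⊗ 𝟙 A'` being non-signalling is
equivalent to terminality of the theory. -/
theorem nonsignalling_iff_terminality
    {C : Type*} [Category C] [MonoidalCategory C] [SymmetricCategory C]
    (d : ∀ A : C, A ⟶ 𝟙_ C) (hdI : d (𝟙_ C) = 𝟙 (𝟙_ C))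
    (bang : ∀ e : 𝟙_ C ⟶ 𝟙_ C, e = 𝟙 (𝟙_ C)) :
    (∀ (A B A' : C) (f : A ⟶ B), NonSignalling d (f ⊗ₘ 𝟙 A')) ↔
      (∀ (A B : C) (f : A ⟶ B), f ≫ d B = d A) :=
  nonsignalling_iff_terminality_general d bang
end
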